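/- arXiv:1908.06076 — 2 statements merged into one kernel-verified Lean document; each statement's English description precedes it below -/
import Mathlib

section
/- Let n ≥ 1, let j ∈ {1,…,n}, and let v be an n-dimensional unit vector all of whose entries lie in ℤ[1/√2] = {x₀ + x₁√2 : x₀, x₁ ∈ ℤ[1/2]}. Then there exist finitely many generators G₁, …, G_ℓ, each taken from the set {(-1)_[a], X_[a,b], H_[a,b] : a, b distinct elements of {1,…,n}}, such that G₁ ⋯ G_ℓ v = e_j, the j-th standard basis vector. -/
open Matrix Complex

noncomputable section

/-- The `m`-level operator of type `W` with indices `f 0, …, f (m-1)`: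
for injective `f`, its `(f j', f k')` entry is `W j' k'` and it agrees
with the identity matrix elsewhere. -/
def levelOp {n m : ℕ} (f : Fin m → Fin n) (W : Matrix (Fin m) (Fin m) ℂ) :
    Matrix (Fin n) (Fin n) ℂ := fun j k =>
  (∑ j' : Fin m, ∑ k' : Fin m, if f j' = j ∧ f k' = k then W j' k' else 0) +
  (if j = k ∧ ∀ j' : Fin m, f j' ≠ j then 1 else 0)

/-- The NOT gate `X`. -/
def Xmat : Matrix (Fin 2) (Fin 2) ℂ := !![0, 1; 1, 0]

/-- The Hadamard gate `H`. -/
def Hmat : Matrix (Fin 2) (Fin 2) ℂ := (Real.sqrt 2 : ℂ)⁻¹ • !![1, 1; 1, -1]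

/-- `G` is one of the generators `(-1)_[a]`, `X_[a,b]`, `H_[a,b]` with `a ≠ b`. -/
def IsRealGen {n : ℕ} (G : Matrix (Fin n) (Fin n) ℂ) : Prop :=
  (∃ a : Fin n, G = levelOp ![a] !![-1]) ∨
  (∃ a b : Fin n, a ≠ b ∧ G = levelOp ![a, b] Xmat) ∨
  (∃ a b : Fin n, a ≠ b ∧ G = levelOp ![a, b] Hmat)

/-- `x` is a dyadic fraction: an element of `ℤ[1/2]` (viewed inside `ℂ`). -/
def IsDyadic (x : ℂ) : Prop := ∃ (u : ℤ) (q : ℕ), x = (u : ℂ) / 2 ^ q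

/-- `x` belongs to the ring `ℤ[1/√2] = {x₀ + x₁√2 : x₀, x₁ ∈ ℤ[1/2]}`. -/
def InDSqrt2 (x : ℂ) : Prop :=
  ∃ x₀ x₁ : ℂ, IsDyadic x₀ ∧ IsDyadic x₁ ∧ x = x₀ + x₁ * Real.sqrt 2

/-
Write `v = x / √2 ^ q` with `x ∈ ℤ[√2]ⁿ`. Since `√2` is irrational, unitarity of `v` becomes the
identity `∑ xₖ² = 2 ^ q` in `ℤ[√2]`. Induct on `q` and, for fixed `q`, on the number of entries
whose rational part is odd. For `q = 0` the identity forces `x = ±eₖ`, which a sign gate and a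
swap move to `e_j`. If every rational part is even, `√2` divides `x` and `q` drops by one.
Otherwise the rational part of the identity modulo `2` says there are evenly many odd rational
parts, and its irrational part says that evenly many of these entries also have odd irrational
part; hence two of them, `x_a` and `x_b`, have congruent irrational parts. Then
`(x_a ± x_b) / √2` lie in `ℤ[√2]` with even rational parts, so `H_[a,b]` lowers the count and
keeps `q`.
-/

open Function Finset Zsqrtd

theorem Finset.sum_comp_update_update {ι M N : Type*} [Fintype ι] [DecidableEq ι]
    [AddCommMonoid N] (g : M → N) (f : ι → M) {i j : ι} (hij : i ≠ j) {a b : M}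
    (h : g a + g b = g (f i) + g (f j)) :
    ∑ k, g (update (update f i a) j b k) = ∑ k, g (f k) := by
  have hsplit : ∀ φ : ι → N, ∑ k, φ k = φ i + φ j + ∑ k ∈ (univ.erase i).erase j, φ k := by
    intro φ
    rw [add_assoc, add_sum_erase _ _ (mem_erase.2 ⟨hij.symm, mem_univ j⟩),
      add_sum_erase _ _ (mem_univ i)]
  rw [hsplit, hsplit (fun k => g (f k))]
  simp only [update_self, update_of_ne hij, h]
  congr 1
  refine sum_congr rfl fun k hk => ?_
  obtain ⟨hkj, hki⟩ : k ≠ j ∧ k ≠ i := by simpa using hk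
  rw [update_of_ne hkj, update_of_ne hki]

theorem Int.exists_eq_one_of_sum_eq_one {ι : Type*} [Fintype ι] {f : ι → ℤ} (hf : ∀ i, 0 ≤ f i)
    (h : ∑ i, f i = 1) : ∃ i₀, f i₀ = 1 ∧ ∀ i ≠ i₀, f i = 0 := by
  classical
  obtain ⟨i₀, hi₀⟩ : ∃ i₀, f i₀ ≠ 0 := by
    by_contra! h0
    simp [h0] at h
  have hrest : 0 ≤ ∑ i ∈ univ.erase i₀, f i := sum_nonneg fun i _ => hf i
  rw [← add_sum_erase _ _ (mem_univ i₀)] at h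
  have hfi₀ : f i₀ = 1 := by have := hf i₀; omega
  have hrest0 : ∑ i ∈ univ.erase i₀, f i = 0 := by omega
  exact ⟨i₀, hfi₀, fun i hi =>
    (sum_eq_zero_iff_of_nonneg fun i _ => hf i).mp hrest0 i (by simpa using hi)⟩

theorem ZMod.exists_pair_eq_of_sum_eq_zero {ι : Type*} [Fintype ι]
    (α β : ι → ZMod 2) (hα : ∑ k, α k = 0) (hαβ : ∑ k, α k * β k = 0) {k₀ : ι}
    (hk₀ : α k₀ = 1) : ∃ k₁ k₂, k₁ ≠ k₂ ∧ α k₁ = 1 ∧ α k₂ = 1 ∧ β k₁ = β k₂ := by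
  set S := univ.filter fun k => α k = 1 ∧ β k = β k₀
  have hS : (S.card : ZMod 2) = 0 := by
    have hind : ∀ a b c : ZMod 2, (if a = 1 ∧ b = c then 1 else 0) = a + a * b + a * c := by
      decide
    rw [natCast_card_filter, sum_congr rfl fun k _ => hind _ _ _,
      sum_add_distrib, sum_add_distrib, ← sum_mul, hα, hαβ]
    ring
  have hk₀S : k₀ ∈ S := by simp [S, hk₀]
  have hcard : 1 < S.card := by
    have := (ZMod.natCast_eq_zero_iff_even).mp hS
    have := card_pos.mpr ⟨k₀, hk₀S⟩
    grind
  obtain ⟨k₁, hk₁, k₂, hk₂, hne⟩ := one_lt_card.mp hcard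
  simp only [S, mem_filter, mem_univ, true_and] at hk₁ hk₂
  exact ⟨k₁, k₂, hne, hk₁.1, hk₂.1, hk₁.2.trans hk₂.2.symm⟩

theorem Zsqrtd.re_sum {d : ℤ} {ι : Type*} (s : Finset ι) (f : ι → ℤ√d) :
    (∑ i ∈ s, f i).re = ∑ i ∈ s, (f i).re :=
  map_sum (AddMonoidHom.mk' Zsqrtd.re re_add) f s

theorem Zsqrtd.im_sum {d : ℤ} {ι : Type*} (s : Finset ι) (f : ι → ℤ√d) :
    (∑ i ∈ s, f i).im = ∑ i ∈ s, (f i).im :=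
  map_sum (AddMonoidHom.mk' Zsqrtd.im im_add) f s

theorem Zsqrtd.im_sqrtd_mul {d : ℤ} (y : ℤ√d) : (sqrtd * y).im = y.re := by simp

theorem Zsqrtd.re_sq {d : ℤ} (x : ℤ√d) : (x ^ 2).re = x.re ^ 2 + d * x.im ^ 2 := by
  rw [sq, re_mul]; ring

theorem Zsqrtd.im_sq {d : ℤ} (x : ℤ√d) : (x ^ 2).im = 2 * x.re * x.im := by
  rw [sq, im_mul]; ring

theorem Zsqrtd.sqrtd_dvd_of_even_re {x : ℤ√2} (h : Even x.re) : sqrtd ∣ x := by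
  obtain ⟨r, hr⟩ := h
  exact ⟨⟨x.im, r⟩, by ext <;> simp [hr, two_mul]⟩

theorem levelOp_mulVec_apply {n m : ℕ} (f : Fin m → Fin n) (W : Matrix (Fin m) (Fin m) ℂ)
    (v : Fin n → ℂ) (i : Fin n) :
    (levelOp f W *ᵥ v) i =
      (∑ j', if f j' = i then ∑ k', W j' k' * v (f k') else 0) +
        if ∀ j', f j' ≠ i then v i else 0 := by
  simp only [mulVec, dotProduct, levelOp, add_mul, sum_add_distrib, sum_mul,
    ite_mul, zero_mul, one_mul, ite_and]
  rw [sum_comm]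
  congr 1
  · refine sum_congr rfl fun j' _ => ?_
    rw [sum_comm]
    split_ifs <;> simp
  · simp [sum_ite_eq]

theorem levelOp_singleton_mulVec {n : ℕ} (a : Fin n) (W : Matrix (Fin 1) (Fin 1) ℂ)
    (v : Fin n → ℂ) : levelOp ![a] W *ᵥ v = update v a (W 0 0 * v a) := by
  funext i
  rw [levelOp_mulVec_apply, update_apply]
  by_cases h : i = a
  · subst h; simp
  · simp [h, Ne.symm h]

theorem levelOp_pair_mulVec {n : ℕ} {a b : Fin n} (hab : a ≠ b) (W : Matrix (Fin 2) (Fin 2) ℂ)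
    (v : Fin n → ℂ) :
    levelOp ![a, b] W *ᵥ v =
      update (update v a (W 0 0 * v a + W 0 1 * v b)) b (W 1 0 * v a + W 1 1 * v b) := by
  funext i
  rw [levelOp_mulVec_apply, update_apply, update_apply]
  by_cases hb : i = b
  · subst hb; simp [hab, Fin.sum_univ_two, Fin.forall_fin_two]
  by_cases ha : i = a
  · subst ha; simp [hab, Ne.symm hab, Fin.sum_univ_two, Fin.forall_fin_two]
  · simp [Ne.symm ha, Ne.symm hb, ha, hb, Fin.sum_univ_two, Fin.forall_fin_two]

def ReducesTo {n : ℕ} (v w : Fin n → ℂ) : Prop :=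
  ∃ L : List (Matrix (Fin n) (Fin n) ℂ), (∀ G ∈ L, IsRealGen G) ∧ L.prod *ᵥ v = w

namespace ReducesTo

variable {n : ℕ} {u v w : Fin n → ℂ}

theorem refl (v : Fin n → ℂ) : ReducesTo v v := ⟨[], by simp, by simp⟩

theorem trans (huv : ReducesTo u v) (hvw : ReducesTo v w) : ReducesTo u w := by
  obtain ⟨L₁, hL₁, rfl⟩ := huv
  obtain ⟨L₂, hL₂, rfl⟩ := hvw
  refine ⟨L₂ ++ L₁, fun G hG => ?_, by simp [mulVec_mulVec]⟩
  rcases List.mem_append.mp hG with hG | hG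
  exacts [hL₂ G hG, hL₁ G hG]

theorem of_isRealGen {G : Matrix (Fin n) (Fin n) ℂ} (hG : IsRealGen G) (v : Fin n → ℂ) :
    ReducesTo v (G *ᵥ v) :=
  ⟨[G], by simpa using hG, by simp⟩

end ReducesTo

theorem reducesTo_single_neg_one {n : ℕ} (a : Fin n) :
    ReducesTo (Pi.single a (-1)) (Pi.single a 1) := by
  convert ReducesTo.of_isRealGen (Or.inl ⟨a, rfl⟩) (Pi.single a (-1) : Fin n → ℂ)
  rw [levelOp_singleton_mulVec]
  simp [Pi.single, update_idem]

theorem reducesTo_single_swap {n : ℕ} {a b : Fin n} (hab : a ≠ b) :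
    ReducesTo (Pi.single b 1) (Pi.single a 1) := by
  convert ReducesTo.of_isRealGen (Or.inr (Or.inl ⟨a, b, hab, rfl⟩)) (Pi.single b 1 : Fin n → ℂ)
  rw [levelOp_pair_mulVec hab]
  ext i
  simp only [Xmat, update_apply, Pi.single_apply]
  split_ifs <;> simp_all

theorem reducesTo_single_of_sign {n : ℕ} (a b : Fin n) {ε : ℂ} (hε : ε = 1 ∨ ε = -1) :
    ReducesTo (Pi.single a ε) (Pi.single b 1) := by
  have hsign : ReducesTo (Pi.single a ε) (Pi.single a 1) := by
    rcases hε with rfl | rfl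
    exacts [.refl _, reducesTo_single_neg_one a]
  rcases eq_or_ne b a with rfl | hba
  exacts [hsign, hsign.trans (reducesTo_single_swap hba)]

def ofZsqrtd : ℤ√2 →+* ℂ := Complex.ofRealHom.comp (toReal (by norm_num))

theorem ofZsqrtd_apply (x : ℤ√2) : ofZsqrtd x = ((x.re + x.im * √2 : ℝ) : ℂ) := by
  simp [ofZsqrtd]

theorem ofZsqrtd_injective : Injective ofZsqrtd :=
  Complex.ofReal_injective.comp <| toReal_injective _ fun m h => by
    have := Int.sq_ne_two_mod_four m
    omega

@[simp]
theorem ofZsqrtd_sqrtd : ofZsqrtd sqrtd = √2 := by simp [ofZsqrtd_apply]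

@[simp]
theorem conj_ofZsqrtd (x : ℤ√2) : starRingEnd ℂ (ofZsqrtd x) = ofZsqrtd x := by
  rw [ofZsqrtd_apply, Complex.conj_ofReal]

-- Mathlib's instance is stated for `ℤ√(d : ℕ)` with `[Nonsquare d]` and is not found for `ℤ√2`.
instance : IsDomain (ℤ√2) := ofZsqrtd_injective.isDomain ofZsqrtd

theorem sqrt_two_pow_two_mul (p : ℕ) : ((√2 : ℝ) : ℂ) ^ (2 * p) = 2 ^ p := by
  rw [pow_mul, ← Complex.ofReal_pow, Real.sq_sqrt zero_le_two]
  norm_num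

theorem sqrt_two_ne_zero : ((√2 : ℝ) : ℂ) ≠ 0 := by
  rw [Complex.ofReal_ne_zero]; positivity

def scaledVec {ι : Type*} (q : ℕ) (x : ι → ℤ√2) : ι → ℂ :=
  fun k => ofZsqrtd (x k) / (√2 : ℝ) ^ q

theorem ofZsqrtd_div_pow_eq (z : ℤ√2) (q m : ℕ) :
    ofZsqrtd z / (√2 : ℝ) ^ q = ofZsqrtd (sqrtd ^ m * z) / (√2 : ℝ) ^ (q + m) := by
  have := sqrt_two_ne_zero
  rw [map_mul, map_pow, ofZsqrtd_sqrtd, pow_add]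
  field_simp

theorem scaledVec_sqrtd_mul {ι : Type*} (q : ℕ) (y : ι → ℤ√2) :
    scaledVec (q + 1) (fun k => sqrtd * y k) = scaledVec q y := by
  funext k
  simpa [scaledVec] using (ofZsqrtd_div_pow_eq (y k) q 1).symm

theorem scaledVec_update {ι : Type*} [DecidableEq ι] (q : ℕ) (x : ι → ℤ√2) (k : ι) (y : ℤ√2) :
    scaledVec q (update x k y) = update (scaledVec q x) k (ofZsqrtd y / (√2 : ℝ) ^ q) := by
  funext i
  rw [scaledVec, apply_update (fun _ z => ofZsqrtd z / (√2 : ℝ) ^ q)]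
  rfl

theorem exists_ofZsqrtd_div_of_inDSqrt2 {w : ℂ} (hw : InDSqrt2 w) :
    ∃ (z : ℤ√2) (q : ℕ), w = ofZsqrtd z / (√2 : ℝ) ^ q := by
  obtain ⟨_, _, ⟨u₀, p₀, rfl⟩, ⟨u₁, p₁, rfl⟩, rfl⟩ := hw
  refine ⟨sqrtd ^ (2 * p₁) * (u₀ : ℤ√2) + sqrtd ^ (2 * p₀) * sqrtd * (u₁ : ℤ√2),
    2 * (p₀ + p₁), ?_⟩
  simp only [map_add, map_mul, map_pow, map_intCast, ofZsqrtd_sqrtd, sqrt_two_pow_two_mul,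
    pow_add]
  field_simp

theorem exists_eq_scaledVec {ι : Type*} [Fintype ι] {v : ι → ℂ} (hv : ∀ k, InDSqrt2 (v k)) :
    ∃ (q : ℕ) (x : ι → ℤ√2), v = scaledVec q x := by
  choose z q hz using fun k => exists_ofZsqrtd_div_of_inDSqrt2 (hv k)
  refine ⟨∑ k, q k, fun k => sqrtd ^ (∑ i, q i - q k) * z k, funext fun k => ?_⟩
  rw [hz, ofZsqrtd_div_pow_eq _ _ (∑ i, q i - q k),
    Nat.add_sub_cancel' (single_le_sum (fun i _ => Nat.zero_le (q i)) (mem_univ k))]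
  rfl

theorem sum_sq_eq_two_pow_of_unit {ι : Type*} [Fintype ι] {q : ℕ} {x : ι → ℤ√2}
    (hunit : ∑ k, starRingEnd ℂ (scaledVec q x k) * scaledVec q x k = 1) :
    ∑ k, x k ^ 2 = 2 ^ q := by
  apply ofZsqrtd_injective
  have := sqrt_two_ne_zero
  simp only [scaledVec, map_div₀, map_pow, conj_ofZsqrtd, Complex.conj_ofReal] at hunit
  rw [map_pow, map_ofNat, ← div_eq_one_iff_eq (pow_ne_zero q two_ne_zero), ← hunit,
    map_sum, sum_div]
  refine sum_congr rfl fun k _ => ?_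
  rw [map_pow, ← sqrt_two_pow_two_mul, pow_mul']
  ring

theorem eq_single_of_sum_sq_eq_one {ι : Type*} [Fintype ι] [DecidableEq ι] {x : ι → ℤ√2}
    (hx : ∑ k, x k ^ 2 = 1) : ∃ (k₀ : ι) (ε : ℤ√2), (ε = 1 ∨ ε = -1) ∧ x = Pi.single k₀ ε := by
  have hre : ∑ k, ((x k).re ^ 2 + 2 * (x k).im ^ 2) = 1 := by
    simpa [Zsqrtd.re_sum, re_sq] using congrArg Zsqrtd.re hx
  obtain ⟨k₀, h₀, hrest⟩ := Int.exists_eq_one_of_sum_eq_one (fun k => by positivity) hre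
  refine ⟨k₀, x k₀, ?_, funext fun k => ?_⟩
  · have him : (x k₀).im = 0 := by nlinarith [sq_nonneg (x k₀).re]
    rcases sq_eq_one_iff.mp (show (x k₀).re ^ 2 = 1 by simpa [him] using h₀) with h | h
    · exact .inl (Zsqrtd.ext (by simp [h]) (by simp [him]))
    · exact .inr (Zsqrtd.ext (by simp [h]) (by simp [him]))
  · rcases eq_or_ne k k₀ with rfl | hk
    · simp
    · have h := hrest k hk
      rw [Pi.single_eq_of_ne hk]
      exact Zsqrtd.ext (by rw [re_zero]; nlinarith [sq_nonneg (x k).im])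
        (by rw [im_zero]; nlinarith [sq_nonneg (x k).re])

theorem exists_sqrtd_mul_eq_of_even_re {ι : Type*} [Fintype ι] {x : ι → ℤ√2} {q : ℕ}
    (heven : ∀ k, Even (x k).re) (hx : ∑ k, x k ^ 2 = 2 ^ (q + 1)) :
    ∃ y : ι → ℤ√2, x = (fun k => sqrtd * y k) ∧ ∑ k, y k ^ 2 = 2 ^ q := by
  choose y hy using fun k => sqrtd_dvd_of_even_re (heven k)
  refine ⟨y, funext hy, mul_left_cancel₀ (two_ne_zero : (2 : ℤ√2) ≠ 0) ?_⟩
  rw [mul_sum, ← pow_succ', ← hx]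
  refine sum_congr rfl fun k _ => ?_
  rw [hy k, mul_pow, sq sqrtd, dmuld]
  rfl

theorem exists_pair_of_sum_sq_eq_two_pow {ι : Type*} [Fintype ι] [DecidableEq ι]
    {x : ι → ℤ√2} {q : ℕ} (hx : ∑ k, x k ^ 2 = 2 ^ (q + 1)) {k₀ : ι} (hk₀ : Odd (x k₀).re) :
    ∃ k₁ k₂, k₁ ≠ k₂ ∧ Odd (x k₁).re ∧ Odd (x k₂).re ∧ Even ((x k₁).im + (x k₂).im) := by
  have hx' : ∑ k, x k ^ 2 = ((2 ^ (q + 1) : ℕ) : ℤ√2) := by rw [hx]; push_cast; rfl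
  have hre : ∑ k, ((x k).re ^ 2 + 2 * (x k).im ^ 2) = 2 ^ (q + 1) := by
    have := congrArg Zsqrtd.re hx'
    simp only [Zsqrtd.re_sum, re_sq, re_natCast] at this
    exact_mod_cast this
  have him : ∑ k, (x k).re * (x k).im = 0 := by
    have := congrArg Zsqrtd.im hx'
    simp only [Zsqrtd.im_sum, im_sq, im_natCast, mul_assoc, ← mul_sum] at this
    omega
  have h2 : (2 : ZMod 2) = 0 := rfl
  obtain ⟨k₁, k₂, hne, h₁, h₂, h₁₂⟩ := ZMod.exists_pair_eq_of_sum_eq_zero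
    (fun k => ((x k).re : ZMod 2)) (fun k => ((x k).im : ZMod 2))
    (by simpa [h2, ZMod.pow_card] using congrArg (Int.cast : ℤ → ZMod 2) hre)
    (by simpa using congrArg (Int.cast : ℤ → ZMod 2) him)
    (k₀ := k₀) ((ZMod.intCast_eq_one_iff_odd).mpr hk₀)
  refine ⟨k₁, k₂, hne, (ZMod.intCast_eq_one_iff_odd).mp h₁, (ZMod.intCast_eq_one_iff_odd).mp h₂, ?_⟩
  rw [← ZMod.intCast_eq_zero_iff_even, Int.cast_add, h₁₂, CharTwo.add_self_eq_zero]

theorem hadamard_mulVec_scaledVec {n q : ℕ} {x : Fin n → ℤ√2} {k₁ k₂ : Fin n} (h12 : k₁ ≠ k₂)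
    {y₁ y₂ : ℤ√2} (hy₁ : x k₁ + x k₂ = sqrtd * y₁) (hy₂ : x k₁ - x k₂ = sqrtd * y₂) :
    levelOp ![k₁, k₂] Hmat *ᵥ scaledVec q x = scaledVec q (update (update x k₁ y₁) k₂ y₂) := by
  rw [levelOp_pair_mulVec h12, scaledVec_update, scaledVec_update]
  replace hy₁ := congrArg ofZsqrtd hy₁
  replace hy₂ := congrArg ofZsqrtd hy₂
  simp only [map_add, map_sub, map_mul, ofZsqrtd_sqrtd] at hy₁ hy₂
  have := sqrt_two_ne_zero
  congr 2 <;>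
    simp only [Hmat, scaledVec, Matrix.smul_apply, of_apply, cons_val', cons_val_zero, cons_val_one,
      cons_val_fin_one, smul_eq_mul, mul_one, mul_neg, neg_mul] <;>
    field_simp
  · linear_combination hy₁
  · linear_combination hy₂

def oddReIndices {ι : Type*} [Fintype ι] (x : ι → ℤ√2) : Finset ι :=
  univ.filter fun k => Odd (x k).re

theorem exists_hadamard_step {n q : ℕ} {x : Fin n → ℤ√2} {k₁ k₂ : Fin n} (h12 : k₁ ≠ k₂)
    (h₁ : Odd (x k₁).re) (h₂ : Odd (x k₂).re) (him : Even ((x k₁).im + (x k₂).im)) :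
    ∃ x' : Fin n → ℤ√2, ReducesTo (scaledVec q x) (scaledVec q x') ∧
      ∑ k, x' k ^ 2 = ∑ k, x k ^ 2 ∧ (oddReIndices x').card < (oddReIndices x).card := by
  obtain ⟨y₁, hy₁⟩ := sqrtd_dvd_of_even_re (x := x k₁ + x k₂) (by simpa using h₁.add_odd h₂)
  obtain ⟨y₂, hy₂⟩ := sqrtd_dvd_of_even_re (x := x k₁ - x k₂) (by simpa using h₁.sub_odd h₂)
  have hre₁ : Even y₁.re := by rw [← im_sqrtd_mul, ← hy₁]; simpa using him
  have hre₂ : Even y₂.re := by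
    rw [← im_sqrtd_mul, ← hy₂]; simpa using (Int.even_sub.trans Int.even_add.symm).mpr him
  refine ⟨update (update x k₁ y₁) k₂ y₂, ?_, ?_, ?_⟩
  · rw [← hadamard_mulVec_scaledVec h12 hy₁ hy₂]
    exact ReducesTo.of_isRealGen (Or.inr (Or.inr ⟨k₁, k₂, h12, rfl⟩)) _
  · refine Finset.sum_comp_update_update (· ^ 2) x h12 (mul_left_cancel₀ two_ne_zero ?_)
    have hd : (sqrtd : ℤ√2) * sqrtd = 2 := by simp
    linear_combination (-(x k₁ + x k₂ + sqrtd * y₁)) * hy₁ - (x k₁ - x k₂ + sqrtd * y₂) * hy₂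
      - (y₁ ^ 2 + y₂ ^ 2) * hd
  · refine (card_le_card fun k hk => ?_).trans_lt
      (card_erase_lt_of_mem (a := k₁) (by simpa [oddReIndices]))
    simp only [oddReIndices, mem_filter, mem_univ, true_and, mem_erase] at hk ⊢
    rcases eq_or_ne k k₂ with rfl | hk₂
    · simp [Int.not_odd_iff_even.mpr hre₂] at hk
    rcases eq_or_ne k k₁ with rfl | hk₁
    · simp [update_of_ne h12, Int.not_odd_iff_even.mpr hre₁] at hk
    · simpa [update_of_ne hk₁, update_of_ne hk₂, hk₁] using hk

theorem reducesTo_single_of_sum_sq_eq_two_pow {n : ℕ} (j : Fin n) (q : ℕ) {x : Fin n → ℤ√2}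
    (hx : ∑ k, x k ^ 2 = 2 ^ q) : ReducesTo (scaledVec q x) (Pi.single j 1) := by
  induction q generalizing x with
  | zero =>
    obtain ⟨k₀, ε, hε, rfl⟩ := eq_single_of_sum_sq_eq_one (by simpa using hx)
    convert reducesTo_single_of_sign k₀ j (ε := ofZsqrtd ε) (by rcases hε with rfl | rfl <;> simp)
    funext k
    rcases eq_or_ne k k₀ with rfl | hk <;> simp [scaledVec, *]
  | succ q ih =>
    induction hm : (oddReIndices x).card using Nat.strong_induction_on generalizing x with
    | _ m ihm =>
    rcases (oddReIndices x).eq_empty_or_nonempty with hempty | ⟨k₀, hk₀⟩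
    · have heven : ∀ k, Even (x k).re := by
        simpa [oddReIndices, filter_eq_empty_iff] using hempty
      obtain ⟨y, rfl, hy⟩ := exists_sqrtd_mul_eq_of_even_re heven hx
      rw [scaledVec_sqrtd_mul]
      exact ih hy
    · obtain ⟨k₁, k₂, h12, h₁, h₂, him⟩ :=
        exists_pair_of_sum_sq_eq_two_pow hx (mem_filter.mp hk₀).2
      obtain ⟨x', hred, hsum, hcard⟩ := exists_hadamard_step (q := q + 1) h12 h₁ h₂ him
      exact hred.trans (ihm _ (hm ▸ hcard) (hsum.trans hx) rfl)

theorem stmt14_general (n : ℕ) (j : Fin n) (v : Fin n → ℂ)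
    (hunit : ∑ k, (starRingEnd ℂ) (v k) * v k = 1)
    (hR : ∀ k, InDSqrt2 (v k)) :
    ∃ L : List (Matrix (Fin n) (Fin n) ℂ),
      (∀ G ∈ L, IsRealGen G) ∧
      L.prod.mulVec v = fun k => if k = j then (1 : ℂ) else 0 := by
  obtain ⟨q, x, rfl⟩ := exists_eq_scaledVec hR
  obtain ⟨L, hL, hLv⟩ :=
    reducesTo_single_of_sum_sq_eq_two_pow j q (sum_sq_eq_two_pow_of_unit hunit)
  exact ⟨L, hL, hLv.trans (funext fun k => Pi.single_apply j 1 k)⟩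

/-- Every unit vector over `ℤ[1/√2]` can be reduced to any standard basis
vector `e_j` by generators `(-1)_[a]`, `X_[a,b]`, `H_[a,b]`. -/
theorem stmt14 (n : ℕ) (hn : 1 ≤ n) (j : Fin n) (v : Fin n → ℂ)
    (hunit : ∑ k, (starRingEnd ℂ) (v k) * v k = 1)
    (hR : ∀ k, InDSqrt2 (v k)) :
    ∃ L : List (Matrix (Fin n) (Fin n) ℂ),
      (∀ G ∈ L, IsRealGen G) ∧
      L.prod.mulVec v = fun k => if k = j then (1 : ℂ) else 0 :=
  stmt14_general n j v hunit hR
end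
end

section
/- Let n ≥ 1 and let v be an n-dimensional unit vector all of whose entries lie in ℤ[1/(i√2)] = {x₀ + x₁·i√2 : x₀, x₁ ∈ ℤ[1/2]}, with lde_{i√2}(v) > 0. Then there exist finitely many generators G₁, …, G_ℓ, each taken from the set {(-1)_[a], X_[a,b], F_[a,b] : a, b distinct elements of {1,…,n}}, such that v' = G₁ ⋯ G_ℓ v satisfies lde_{i√2}(v') < lde_{i√2}(v). -/
open Matrix Complex

noncomputable section

/-- The gate `F = (1/2)[[1+i√2, 1],[1, -1+i√2]]`. -/
def Fmat : Matrix (Fin 2) (Fin 2) ℂ :=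
  (2 : ℂ)⁻¹ • !![1 + Complex.I * Real.sqrt 2, 1; 1, -1 + Complex.I * Real.sqrt 2]

/-- `G` is one of the generators `(-1)_[a]`, `X_[a,b]`, `F_[a,b]` with `a ≠ b`. -/
def IsImGen {n : ℕ} (G : Matrix (Fin n) (Fin n) ℂ) : Prop :=
  (∃ a : Fin n, G = levelOp ![a] !![-1]) ∨
  (∃ a b : Fin n, a ≠ b ∧ G = levelOp ![a, b] Xmat) ∨
  (∃ a b : Fin n, a ≠ b ∧ G = levelOp ![a, b] Fmat)

/-- `x` belongs to the ring `ℤ[1/(i√2)] = {x₀ + x₁·i√2 : x₀, x₁ ∈ ℤ[1/2]}`. -/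
def InDIrt2 (x : ℂ) : Prop :=
  ∃ x₀ x₁ : ℂ, IsDyadic x₀ ∧ IsDyadic x₁ ∧ x = x₀ + x₁ * (Complex.I * Real.sqrt 2)

/-- The least i√2-denominator exponent of a vector `v` with entries in
`ℤ[1/(i√2)]`: the least `q : ℕ` such that `(i√2)^q · v` has entries in `ℤ[i√2]`. -/
def ldeIrt2 {n : ℕ} (v : Fin n → ℂ) : ℕ :=
  sInf {q : ℕ | ∀ j, ∃ a b : ℤ,
    (Complex.I * Real.sqrt 2) ^ q * v j = (a : ℂ) + (b : ℂ) * (Complex.I * Real.sqrt 2)}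


/-! Write `ω = i√2`, so `ω² = -2`, and `a + bω ∈ ℤ[ω]` is divisible by `ω` iff `a` is even.
If `k = lde v > 0`, the entries of `ωᵏ v` lie in `ℤ[ω]` and have squared norms `a² + 2b²`
summing to `2ᵏ`, so an even number of them are not divisible by `ω`. It suffices to make
every entry divisible by `ω`, and this is done two entries `x = a + bω`, `y = c + dω` at a time:
if `b ≡ d (mod 2)`, then `F² = (ω/2)[[1,1],[1,-1]]` sends them to `ω(x ± y)/2` with `2 ∣ x ± y`;
otherwise `F`, applied to `(x, y)` or to `(y, x)` according to `a + c - 2b (mod 4)`, sends both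
to multiples of `ω`. -/

local notation "ω" => Complex.I * (Real.sqrt 2 : ℂ)

lemma omega_sq : ω ^ 2 = -2 := by
  rw [mul_pow, I_sq, ← ofReal_pow, Real.sq_sqrt zero_le_two]
  norm_num

def InZIrt2 (z : ℂ) : Prop := ∃ a b : ℤ, z = a + b * ω

def Irt2Dvd (z : ℂ) : Prop := ∃ r, InZIrt2 r ∧ z = ω * r

lemma InZIrt2.omega_mul {z : ℂ} (hz : InZIrt2 z) : InZIrt2 (ω * z) := by
  obtain ⟨a, b, rfl⟩ := hz
  exact ⟨-2 * b, a, by push_cast; linear_combination b * omega_sq⟩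

lemma Irt2Dvd.inZIrt2 {z : ℂ} (hz : Irt2Dvd z) : InZIrt2 z := by
  obtain ⟨r, hr, rfl⟩ := hz
  exact hr.omega_mul

lemma irt2Dvd_iff_even (a b : ℤ) : Irt2Dvd (a + b * ω) ↔ Even a := by
  constructor
  · rintro ⟨_, ⟨c, d, rfl⟩, h⟩
    refine ⟨-d, ?_⟩
    have h' : (a : ℂ) + b * ω = (-2 * d : ℤ) + c * ω := by
      rw [h]; push_cast; linear_combination d * omega_sq
    have had : (a : ℝ) = (-2 * d : ℤ) := by simpa using congrArg re h'
    have had : a = -2 * d := by exact_mod_cast had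
    omega
  · rintro ⟨c, rfl⟩
    exact ⟨b + -c * ω, ⟨b, -c, by push_cast; ring⟩, by push_cast; linear_combination c * omega_sq⟩

lemma irt2Dvd_half {A B : ℤ} (hA : 4 ∣ A) (hB : 2 ∣ B) : Irt2Dvd ((A + B * ω) / 2) := by
  obtain ⟨s, rfl⟩ := hA
  obtain ⟨t, rfl⟩ := hB
  exact ⟨t + -s * ω, ⟨t, -s, by push_cast; ring⟩, by push_cast; linear_combination s * omega_sq⟩

lemma normSq_intCast_add_intCast_mul_omega (a b : ℤ) :
    normSq (a + b * ω) = ((a.natAbs ^ 2 + 2 * b.natAbs ^ 2 : ℕ) : ℝ) := by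
  simp [normSq_apply, Nat.cast_natAbs, sq_abs]
  linear_combination (b : ℝ) ^ 2 * Real.sq_sqrt zero_le_two

lemma omega_ne_zero : ω ≠ 0 :=
  mul_ne_zero I_ne_zero (ofReal_ne_zero.mpr (Real.sqrt_ne_zero'.mpr two_pos))

section LevelOp

variable {n : ℕ} {j k : Fin n} (W : Matrix (Fin 2) (Fin 2) ℂ) (u : Fin n → ℂ)

lemma levelOp_pair_mulVec_apply (hjk : j ≠ k) (l : Fin n) :
    (levelOp ![j, k] W *ᵥ u) l =
      if l = j then W 0 0 * u j + W 0 1 * u k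
      else if l = k then W 1 0 * u j + W 1 1 * u k else u l := by
  unfold levelOp Matrix.mulVec dotProduct
  simp only [Fin.sum_univ_two, Matrix.cons_val_zero, Matrix.cons_val_one, Fin.forall_fin_two]
  rcases eq_or_ne l j with rfl | hlj
  · simp [hjk.symm, Finset.sum_add_distrib, add_mul]
  · rcases eq_or_ne l k with rfl | hlk
    · simp [hjk, hlj, Finset.sum_add_distrib, add_mul]
    · simp [hlj.symm, hlk.symm, hlj, hlk]

lemma levelOp_pair_mulVec_apply_left (hjk : j ≠ k) :
    (levelOp ![j, k] W *ᵥ u) j = W 0 0 * u j + W 0 1 * u k := by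
  simp [levelOp_pair_mulVec_apply W u hjk]

lemma levelOp_pair_mulVec_apply_right (hjk : j ≠ k) :
    (levelOp ![j, k] W *ᵥ u) k = W 1 0 * u j + W 1 1 * u k := by
  simp [levelOp_pair_mulVec_apply W u hjk, hjk.symm]

lemma levelOp_pair_mulVec_apply_of_ne (hjk : j ≠ k) {l : Fin n} (hlj : l ≠ j) (hlk : l ≠ k) :
    (levelOp ![j, k] W *ᵥ u) l = u l := by
  simp [levelOp_pair_mulVec_apply W u hjk, hlj, hlk]

end LevelOp

section Fmat

variable (a b c d : ℤ)

lemma Fmat_row_zero :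
    Fmat 0 0 * (a + b * ω) + Fmat 0 1 * (c + d * ω) =
      (((a - 2 * b + c : ℤ) : ℂ) + (a + b + d : ℤ) * ω) / 2 := by
  simp [Fmat]
  linear_combination (b / 2 : ℂ) * omega_sq

lemma Fmat_row_one :
    Fmat 1 0 * (a + b * ω) + Fmat 1 1 * (c + d * ω) =
      (((a - c - 2 * d : ℤ) : ℂ) + (b + c - d : ℤ) * ω) / 2 := by
  simp [Fmat]
  linear_combination (d / 2 : ℂ) * omega_sq

lemma Fmat_sq_row_zero :
    Fmat 0 0 * (Fmat 0 0 * (a + b * ω) + Fmat 0 1 * (c + d * ω)) +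
        Fmat 0 1 * (Fmat 1 0 * (a + b * ω) + Fmat 1 1 * (c + d * ω)) =
      (((-2 * (b + d) : ℤ) : ℂ) + (a + c : ℤ) * ω) / 2 := by
  simp [Fmat]
  linear_combination ((a + b * ω) / 4 + (b + d) / 2 : ℂ) * omega_sq

lemma Fmat_sq_row_one :
    Fmat 1 0 * (Fmat 0 0 * (a + b * ω) + Fmat 0 1 * (c + d * ω)) +
        Fmat 1 1 * (Fmat 1 0 * (a + b * ω) + Fmat 1 1 * (c + d * ω)) =
      (((-2 * (b - d) : ℤ) : ℂ) + (a - c : ℤ) * ω) / 2 := by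
  simp [Fmat]
  linear_combination ((c + d * ω) / 4 + (b - d) / 2 : ℂ) * omega_sq

end Fmat

def irt2Gates (n : ℕ) : Submonoid (Matrix (Fin n) (Fin n) ℂ) :=
  Submonoid.closure {G | IsImGen G}

section Pair

variable {n : ℕ} {j k : Fin n} {u : Fin n → ℂ} {a b c d : ℤ}

lemma levelOp_Fmat_mem_irt2Gates (hjk : j ≠ k) : levelOp ![j, k] Fmat ∈ irt2Gates n :=
  Submonoid.subset_closure (Or.inr (Or.inr ⟨j, k, hjk, rfl⟩))

lemma irt2Dvd_levelOp_Fmat_mulVec (hjk : j ≠ k) (hj : u j = a + b * ω) (hk : u k = c + d * ω)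
    (ha : Odd a) (hc : Odd c) (hbd : Odd (b + d)) (h4 : 4 ∣ a - 2 * b + c) :
    Irt2Dvd ((levelOp ![j, k] Fmat *ᵥ u) j) ∧ Irt2Dvd ((levelOp ![j, k] Fmat *ᵥ u) k) := by
  rw [levelOp_pair_mulVec_apply_left _ _ hjk, levelOp_pair_mulVec_apply_right _ _ hjk, hj, hk,
    Fmat_row_zero, Fmat_row_one]
  rw [Int.odd_iff] at ha hc hbd
  exact ⟨irt2Dvd_half h4 (by omega), irt2Dvd_half (by omega) (by omega)⟩

lemma irt2Dvd_levelOp_Fmat_sq_mulVec (hjk : j ≠ k) (hj : u j = a + b * ω)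
    (hk : u k = c + d * ω) (ha : Odd a) (hc : Odd c) (hbd : Even (b + d)) :
    Irt2Dvd (((levelOp ![j, k] Fmat * levelOp ![j, k] Fmat) *ᵥ u) j) ∧
      Irt2Dvd (((levelOp ![j, k] Fmat * levelOp ![j, k] Fmat) *ᵥ u) k) := by
  simp only [← mulVec_mulVec, levelOp_pair_mulVec_apply_left _ _ hjk,
    levelOp_pair_mulVec_apply_right _ _ hjk, hj, hk, Fmat_sq_row_zero, Fmat_sq_row_one]
  rw [Int.odd_iff] at ha hc
  rw [Int.even_iff] at hbd
  exact ⟨irt2Dvd_half (by omega) (by omega), irt2Dvd_half (by omega) (by omega)⟩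

lemma exists_mem_irt2Gates_irt2Dvd_pair (hjk : j ≠ k) (hu : ∀ l, InZIrt2 (u l))
    (hj : ¬ Irt2Dvd (u j)) (hk : ¬ Irt2Dvd (u k)) :
    ∃ M ∈ irt2Gates n, Irt2Dvd ((M *ᵥ u) j) ∧ Irt2Dvd ((M *ᵥ u) k) ∧
      ∀ l, l ≠ j → l ≠ k → (M *ᵥ u) l = u l := by
  obtain ⟨a, b, hja⟩ := hu j
  obtain ⟨c, d, hkc⟩ := hu k
  have ha : Odd a := by
    rw [hja, irt2Dvd_iff_even] at hj
    exact Int.not_even_iff_odd.mp hj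
  have hc : Odd c := by
    rw [hkc, irt2Dvd_iff_even] at hk
    exact Int.not_even_iff_odd.mp hk
  have hF := levelOp_Fmat_mem_irt2Gates hjk
  rcases Int.even_or_odd (b + d) with hbd | hbd
  · obtain ⟨hj', hk'⟩ := irt2Dvd_levelOp_Fmat_sq_mulVec hjk hja hkc ha hc hbd
    refine ⟨_, mul_mem hF hF, hj', hk', fun l hlj hlk => ?_⟩
    rw [← mulVec_mulVec, levelOp_pair_mulVec_apply_of_ne _ _ hjk hlj hlk,
      levelOp_pair_mulVec_apply_of_ne _ _ hjk hlj hlk]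
  by_cases h4 : 4 ∣ a - 2 * b + c
  · obtain ⟨hj', hk'⟩ := irt2Dvd_levelOp_Fmat_mulVec hjk hja hkc ha hc hbd h4
    exact ⟨_, hF, hj', hk', fun l hlj hlk => levelOp_pair_mulVec_apply_of_ne _ _ hjk hlj hlk⟩
  -- otherwise `4 ∣ c - 2 * d + a`, since `b - d` is odd: apply `F` with the indices swapped
  have h4' : 4 ∣ c - 2 * d + a := by
    rw [Int.odd_iff] at ha hc hbd
    omega
  obtain ⟨hk', hj'⟩ := irt2Dvd_levelOp_Fmat_mulVec hjk.symm hkc hja hc ha (by rwa [add_comm]) h4'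
  exact ⟨_, levelOp_Fmat_mem_irt2Gates hjk.symm, hj', hk',
    fun l hlj hlk => levelOp_pair_mulVec_apply_of_ne _ _ hjk.symm hlk hlj⟩

end Pair

open Classical Finset in
lemma exists_mem_irt2Gates_forall_irt2Dvd {n : ℕ} {u : Fin n → ℂ} (hu : ∀ l, InZIrt2 (u l))
    (hodd : Even #{l | ¬ Irt2Dvd (u l)}) :
    ∃ M ∈ irt2Gates n, ∀ l, Irt2Dvd ((M *ᵥ u) l) := by
  obtain ⟨r, hr⟩ := hodd
  induction r generalizing u with
  | zero =>
    refine ⟨1, one_mem _, fun l => ?_⟩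
    rw [one_mulVec]
    by_contra hl
    simp only [add_zero, card_eq_zero, filter_eq_empty_iff] at hr
    exact hr (mem_univ l) hl
  | succ r ih =>
    obtain ⟨j, hj, k, hk, hjk⟩ := one_lt_card.mp (by omega : 1 < #{l | ¬ Irt2Dvd (u l)})
    obtain ⟨M, hM, hMj, hMk, hMl⟩ :=
      exists_mem_irt2Gates_irt2Dvd_pair hjk hu (mem_filter.mp hj).2 (mem_filter.mp hk).2
    have hset : ({l | ¬ Irt2Dvd ((M *ᵥ u) l)} : Finset (Fin n)) =
        (({l | ¬ Irt2Dvd (u l)} : Finset (Fin n)).erase j).erase k := by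
      ext l
      simp only [mem_filter, mem_erase, mem_univ, true_and]
      by_cases hlj : l = j
      · subst hlj; simp [hMj]
      by_cases hlk : l = k
      · subst hlk; simp [hMk]
      simp [hlj, hlk, hMl l hlj hlk]
    have hu' : ∀ l, InZIrt2 ((M *ᵥ u) l) := fun l => by
      by_cases hlj : l = j
      · exact hlj ▸ hMj.inZIrt2
      by_cases hlk : l = k
      · exact hlk ▸ hMk.inZIrt2
      exact hMl l hlj hlk ▸ hu l
    have hcard : #{l | ¬ Irt2Dvd ((M *ᵥ u) l)} = r + r := by
      rw [hset, card_erase_of_mem (mem_erase.mpr ⟨hjk.symm, hk⟩), card_erase_of_mem hj, hr]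
      omega
    obtain ⟨N, hN, hNu⟩ := ih hu' hcard
    exact ⟨N * M, mul_mem hN hM, fun l => mulVec_mulVec u N M ▸ hNu l⟩

open Classical Finset in
lemma even_card_not_irt2Dvd {n p : ℕ} {u : Fin n → ℂ} (hu : ∀ l, InZIrt2 (u l))
    (hnorm : ∑ l, normSq (u l) = 2 ^ (p + 1)) : Even #{l | ¬ Irt2Dvd (u l)} := by
  choose a b hab using hu
  have hsum : ∑ l, ((a l).natAbs ^ 2 + 2 * (b l).natAbs ^ 2) = 2 ^ (p + 1) := by
    simp only [hab, normSq_intCast_add_intCast_mul_omega] at hnorm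
    exact_mod_cast hnorm
  have hset : filter (fun l => ¬ Irt2Dvd (u l)) univ =
      filter (fun l => Odd ((a l).natAbs ^ 2 + 2 * (b l).natAbs ^ 2)) univ := by
    ext l
    simp [hab, irt2Dvd_iff_even, Nat.odd_add, Nat.odd_pow_iff two_ne_zero, Int.natAbs_odd,
      parity_simps]
  rw [hset, ← even_sum_iff_even_card_odd, hsum]
  exact (Nat.even_pow' p.succ_ne_zero).mpr even_two

lemma sum_normSq_omega_pow_smul {n : ℕ} {v : Fin n → ℂ}
    (hunit : ∑ j, (starRingEnd ℂ) (v j) * v j = 1) (q : ℕ) :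
    ∑ j, normSq ((ω ^ q • v) j) = 2 ^ q := by
  have hv : ∑ j, normSq (v j) = 1 := by
    have h : ((∑ j, normSq (v j) : ℝ) : ℂ) = 1 := by
      push_cast
      simpa only [normSq_eq_conj_mul_self] using hunit
    exact_mod_cast h
  simp [normSq_mul, ← Finset.mul_sum, hv]

lemma inZIrt2_omega_pow_mul_of_irt2Dvd {p : ℕ} {z : ℂ} (h : Irt2Dvd (ω ^ (p + 1) * z)) :
    InZIrt2 (ω ^ p * z) := by
  obtain ⟨r, hr, h⟩ := h
  convert hr using 1
  exact mul_left_cancel₀ omega_ne_zero (by rw [← h]; ring)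

theorem stmt16_general (n : ℕ) (v : Fin n → ℂ)
    (hunit : ∑ j, (starRingEnd ℂ) (v j) * v j = 1)
    (hlde : 0 < ldeIrt2 v) :
    ∃ L : List (Matrix (Fin n) (Fin n) ℂ),
      (∀ G ∈ L, IsImGen G) ∧ ldeIrt2 (L.prod.mulVec v) < ldeIrt2 v := by
  obtain ⟨p, hp⟩ := Nat.exists_eq_add_one.mpr hlde
  have hu : ∀ j, InZIrt2 ((ω ^ (p + 1) • v) j) :=
    hp ▸ Nat.sInf_mem (Nat.nonempty_of_pos_sInf hlde)
  obtain ⟨M, hM, hdvd⟩ := exists_mem_irt2Gates_forall_irt2Dvd hu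
    (even_card_not_irt2Dvd hu (sum_normSq_omega_pow_smul hunit _))
  obtain ⟨L, hL, rfl⟩ := Submonoid.exists_list_of_mem_closure hM
  refine ⟨L, hL, ?_⟩
  have hle : ldeIrt2 (L.prod *ᵥ v) ≤ p := Nat.sInf_le fun j =>
    inZIrt2_omega_pow_mul_of_irt2Dvd (by simpa [mulVec_smul] using hdvd j)
  omega

/-- A unit vector over `ℤ[1/(i√2)]` with positive least i√2-denominator
exponent can have its exponent strictly reduced by generators `(-1)_[a]`,
`X_[a,b]`, `F_[a,b]`. -/
theorem stmt16 (n : ℕ) (hn : 1 ≤ n) (v : Fin n → ℂ)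
    (hunit : ∑ j, (starRingEnd ℂ) (v j) * v j = 1)
    (hR : ∀ j, InDIrt2 (v j))
    (hlde : 0 < ldeIrt2 v) :
    ∃ L : List (Matrix (Fin n) (Fin n) ℂ),
      (∀ G ∈ L, IsImGen G) ∧ ldeIrt2 (L.prod.mulVec v) < ldeIrt2 v :=
  stmt16_general n v hunit hlde
end
end
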